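/- Let m ≥ 4. Define positive constants α_{ij} for (i,j) ∈ S_m by: α_{im} = 1/(m−3) for 3 ≤ i ≤ m−1, α_{2j} = (2m−2j−1)/(m−3)² for 3 ≤ j ≤ m−1, and α_{ij} = 1/(m−3)² for 3 ≤ i < j ≤ m−1. Then the identity Σ_{(i,j)∈S_m} α_{ij}·q_{ij}(x) = 1 holds for all x ∈ ℝ^{m−3}; that is, the linear forms p_{ij}(x) = α_{ij} q_{ij}(x) sum to 1 identically. -/
import Mathlib


open scoped BigOperators

noncomputable section

/-- The columns of the normalized `2 × m` matrix parametrizing `M_{0,m}`: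
`c_1 = (0,-1)`, `c_2 = (1,0)`, `c_j = (1, x_{j-2})` for `3 ≤ j ≤ m-1`, `c_m = (1,1)`. -/
def chyCol (m : ℕ) (x : Fin (m - 3) → ℝ) (j : ℕ) : ℝ × ℝ :=
  if j = 1 then (0, -1)
  else if j = 2 then (1, 0)
  else if j = m then (1, 1)
  else (1, if h : j - 3 < m - 3 then x ⟨j - 3, h⟩ else 0)

/-- The `2 × 2` minor `q_{ij}(x) = det(c_i, c_j)`. -/
def chyQ (m : ℕ) (i j : ℕ) (x : Fin (m - 3) → ℝ) : ℝ :=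
  (chyCol m x i).1 * (chyCol m x j).2 - (chyCol m x i).2 * (chyCol m x j).1

/-- The state set `S_m = {(i,j) : 2 ≤ i < j ≤ m, (i,j) ≠ (2,m)}`. -/
def chyStates (m : ℕ) : Finset (ℕ × ℕ) :=
  ((Finset.Icc 2 m) ×ˢ (Finset.Icc 2 m)).filter fun p => p.1 < p.2 ∧ p ≠ (2, m)

/-- The positive constants `α_{ij}`: `α_{im} = 1/(m-3)`,
`α_{2j} = (2m-2j-1)/(m-3)²` and `α_{ij} = 1/(m-3)²` otherwise. -/
def chyAlpha (m : ℕ) (i j : ℕ) : ℝ :=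
  if j = m then 1 / ((m : ℝ) - 3)
  else if i = 2 then (2 * (m : ℝ) - 2 * (j : ℝ) - 1) / ((m : ℝ) - 3) ^ 2
  else 1 / ((m : ℝ) - 3) ^ 2

/-- The linear forms `p_{ij} = α_{ij} q_{ij}` sum to `1` identically. -/
theorem stmt4 (m : ℕ) (hm : 4 ≤ m) :
    ∀ x : Fin (m - 3) → ℝ,
      ∑ p ∈ chyStates m, chyAlpha m p.1 p.2 * chyQ m p.1 p.2 x = 1 := by
  obtain ⟨n, rfl⟩ : ∃ n, m = n + 3 := ⟨m - 3, by omega⟩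
  have hn : 1 ≤ n := by omega
  have hnR : (0:ℝ) < (n:ℝ) := by exact_mod_cast hn
  intro x
  set y : ℕ → ℝ := fun k => if h : k < n then x ⟨k, h⟩ else 0 with hy
  -- column lemmas
  have hc2 : chyCol (n+3) x 2 = (1, 0) := by
    rw [chyCol, if_neg (by omega), if_pos rfl]
  have hcm : chyCol (n+3) x (n+3) = (1, 1) := by
    rw [chyCol, if_neg (by omega), if_neg (by omega), if_pos rfl]
  have hck : ∀ k, k < n → chyCol (n+3) x (k+3) = (1, y k) := by
    intro k hk
    rw [chyCol, if_neg (by omega), if_neg (by omega), if_neg (by omega),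
      dif_pos (show k + 3 - 3 < n + 3 - 3 by omega)]
    simp only [hy]
    rw [dif_pos hk]
    simp
  -- minor lemmas
  have hq2 : ∀ k, k < n → chyQ (n+3) 2 (k+3) x = y k := by
    intro k hk; rw [chyQ, hc2, hck k hk]; ring
  have hqm : ∀ k, k < n → chyQ (n+3) (k+3) (n+3) x = 1 - y k := by
    intro k hk; rw [chyQ, hcm, hck k hk]; ring
  have hqkl : ∀ k l, k < n → l < n → chyQ (n+3) (k+3) (l+3) x = y l - y k := by
    intro k l hk hl; rw [chyQ, hck k hk, hck l hl]; ring
  -- alpha lemmas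
  have hnn : ((n+3:ℕ) : ℝ) - 3 = (n:ℝ) := by push_cast; ring
  have ha2 : ∀ k, k < n → chyAlpha (n+3) 2 (k+3) = (2*(n:ℝ) - 2*(k:ℝ) - 1) / (n:ℝ)^2 := by
    intro k hk
    rw [chyAlpha, if_neg (by omega), if_pos rfl, hnn]
    push_cast; ring_nf
  have ham : ∀ k, k < n → chyAlpha (n+3) (k+3) (n+3) = 1 / (n:ℝ) := by
    intro k hk
    rw [chyAlpha, if_pos rfl, hnn]
  have hal : ∀ k l, k < n → l < n → chyAlpha (n+3) (k+3) (l+3) = 1 / (n:ℝ)^2 := by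
    intro k l hk hl
    rw [chyAlpha, if_neg (by omega), if_neg (by omega), hnn]
  -- set decomposition
  set A : Finset (ℕ × ℕ) := (Finset.range n).image (fun k => (2, k+3)) with hA
  set B : Finset (ℕ × ℕ) := (Finset.range n).image (fun k => (k+3, n+3)) with hB
  set C : Finset (ℕ × ℕ) :=
    (((Finset.range n) ×ˢ (Finset.range n)).filter (fun p => p.1 < p.2)).image
      (fun p => (p.1+3, p.2+3)) with hC
  have hset : chyStates (n+3) = (A ∪ B) ∪ C := by
    ext ⟨a, b⟩
    simp only [chyStates, hA, hB, hC, Finset.mem_filter, Finset.mem_product, Finset.mem_Icc,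
      Finset.mem_union, Finset.mem_image, Finset.mem_range, Prod.mk.injEq, ne_eq, not_and]
    constructor
    · rintro ⟨⟨⟨h2a, ham'⟩, h2b, hbm⟩, hab, hne⟩
      have hne' : ¬(a = 2 ∧ b = n + 3) := by
        intro ⟨h1, h2⟩; exact hne h1 h2
      by_cases ha : a = 2
      · left; left; exact ⟨b - 3, by omega, by omega, by omega⟩
      · by_cases hb : b = n + 3
        · left; right; exact ⟨a - 3, by omega, by omega, by omega⟩
        · right; exact ⟨(a-3, b-3), ⟨⟨by omega, by omega⟩, by omega⟩, by omega, by omega⟩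
    · rintro ((⟨k, hk, hka, hkb⟩ | ⟨k, hk, hka, hkb⟩) | ⟨⟨k,l⟩, ⟨⟨hk, hl⟩, hkl⟩, hka, hkb⟩) <;>
        refine ⟨⟨⟨by omega, by omega⟩, by omega, by omega⟩, by omega, ?_⟩ <;>
        intro h1 h2 <;> omega
  have hdAB : Disjoint A B := by
    rw [Finset.disjoint_left]
    rintro ⟨a, b⟩ hab hab'
    simp only [hA, hB, Finset.mem_image, Finset.mem_range, Prod.mk.injEq] at hab hab'
    obtain ⟨k, hk, hka, hkb⟩ := hab
    obtain ⟨l, hl, hla, hlb⟩ := hab'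
    omega
  have hdABC : Disjoint (A ∪ B) C := by
    rw [Finset.disjoint_left]
    rintro ⟨a, b⟩ hab hab'
    simp only [hA, hB, hC, Finset.mem_union, Finset.mem_image, Finset.mem_range,
      Finset.mem_filter, Finset.mem_product, Prod.mk.injEq, Prod.exists] at hab hab'
    obtain ⟨k, l, ⟨⟨hk, hl⟩, hkl⟩, hka, hkb⟩ := hab'
    rcases hab with ⟨j, hj, hja, hjb⟩ | ⟨j, hj, hja, hjb⟩ <;> omega
  rw [hset, Finset.sum_union hdABC, Finset.sum_union hdAB]
  -- sum over A
  have hSA : ∑ p ∈ A, chyAlpha (n+3) p.1 p.2 * chyQ (n+3) p.1 p.2 x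
      = ∑ k ∈ Finset.range n, ((2*(n:ℝ) - 2*(k:ℝ) - 1) / (n:ℝ)^2) * y k := by
    rw [hA, Finset.sum_image (by intro a _ b _ h; simpa using h)]
    refine Finset.sum_congr rfl fun k hk => ?_
    rw [Finset.mem_range] at hk
    rw [ha2 k hk, hq2 k hk]
  have hSB : ∑ p ∈ B, chyAlpha (n+3) p.1 p.2 * chyQ (n+3) p.1 p.2 x
      = ∑ k ∈ Finset.range n, (1 / (n:ℝ)) * (1 - y k) := by
    rw [hB, Finset.sum_image (by intro a _ b _ h; simpa using h)]
    refine Finset.sum_congr rfl fun k hk => ?_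
    rw [Finset.mem_range] at hk
    rw [ham k hk, hqm k hk]
  have hSC : ∑ p ∈ C, chyAlpha (n+3) p.1 p.2 * chyQ (n+3) p.1 p.2 x
      = ∑ k ∈ Finset.range n, (1 / (n:ℝ)^2) * ((2*(k:ℝ) - (n:ℝ) + 1) * y k) := by
    rw [hC, Finset.sum_image (by rintro ⟨a,b⟩ _ ⟨c,d⟩ _ h; simp only [Prod.mk.injEq] at h ⊢; omega)]
    have step1 : ∑ p ∈ ((Finset.range n) ×ˢ (Finset.range n)).filter (fun p => p.1 < p.2),
        chyAlpha (n+3) (p.1+3) (p.2+3) * chyQ (n+3) (p.1+3) (p.2+3) x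
        = ∑ p ∈ ((Finset.range n) ×ˢ (Finset.range n)).filter (fun p => p.1 < p.2),
          (1 / (n:ℝ)^2) * (y p.2 - y p.1) := by
      refine Finset.sum_congr rfl fun p hp => ?_
      simp only [Finset.mem_filter, Finset.mem_product, Finset.mem_range] at hp
      rw [hal p.1 p.2 hp.1.1 hp.1.2, hqkl p.1 p.2 hp.1.1 hp.1.2]
    rw [step1, ← Finset.mul_sum]
    have hT : ∑ p ∈ ((Finset.range n) ×ˢ (Finset.range n)).filter (fun p => p.1 < p.2),
        (y p.2 - y p.1) = ∑ k ∈ Finset.range n, (2*(k:ℝ) - (n:ℝ) + 1) * y k := by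
      rw [Finset.sum_filter, Finset.sum_product]
      have e1 : ∀ k ∈ Finset.range n, (∑ l ∈ Finset.range n, if k < l then y l - y k else 0)
          = (∑ l ∈ Finset.range n, if k < l then y l else 0) - ((n:ℝ) - (k:ℝ) - 1) * y k := by
        intro k hk
        rw [Finset.mem_range] at hk
        have h1 : (∑ l ∈ Finset.range n, if k < l then y l - y k else 0)
            = (∑ l ∈ Finset.range n, if k < l then y l else 0)
            - (∑ l ∈ Finset.range n, if k < l then y k else 0) := by
          rw [← Finset.sum_sub_distrib]
          refine Finset.sum_congr rfl fun l _ => ?_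
          split <;> ring
        rw [h1]
        congr 1
        rw [← Finset.sum_filter]
        have h2 : (Finset.range n).filter (fun l => k < l) = Finset.Ico (k+1) n := by
          ext l; simp [Finset.mem_Ico]; omega
        rw [h2, Finset.sum_const, Nat.card_Ico, nsmul_eq_mul]
        have h3 : ((n - (k+1) : ℕ) : ℝ) = (n:ℝ) - (k:ℝ) - 1 := by
          rw [Nat.cast_sub (by omega : k+1 ≤ n)]; push_cast; ring
        rw [h3]
      rw [Finset.sum_congr rfl e1, Finset.sum_sub_distrib, Finset.sum_comm]
      have e2 : ∀ l ∈ Finset.range n, (∑ k ∈ Finset.range n, if k < l then y l else 0)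
          = (l:ℝ) * y l := by
        intro l hl
        rw [Finset.mem_range] at hl
        rw [← Finset.sum_filter]
        have h2 : (Finset.range n).filter (fun k => k < l) = Finset.range l := by
          ext k; simp; omega
        rw [h2, Finset.sum_const, Finset.card_range, nsmul_eq_mul]
      rw [Finset.sum_congr rfl e2, ← Finset.sum_sub_distrib]
      refine Finset.sum_congr rfl fun k hk => ?_
      ring
    rw [hT, Finset.mul_sum]
  rw [hSA, hSB, hSC, ← Finset.sum_add_distrib, ← Finset.sum_add_distrib]
  have key : ∀ k ∈ Finset.range n, (2*(n:ℝ)-2*(k:ℝ)-1)/(n:ℝ)^2 * y k + 1/(n:ℝ) * (1 - y k)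
      + 1/(n:ℝ)^2 * ((2*(k:ℝ) - (n:ℝ) + 1) * y k) = 1/(n:ℝ) := by
    intro k _
    field_simp
    ring
  rw [Finset.sum_congr rfl key, Finset.sum_const, Finset.card_range, nsmul_eq_mul]
  field_simp

end
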